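/- Fix d ≥ 2 and let a_1, …, a_d ∈ k be distinct and b_1, …, b_d ∈ k^×, and let u, v be variables. Then the d(d−1) rational functions b_i(u a_j + v)/(a_j − a_i), indexed by ordered pairs (i, j) with 1 ≤ i ≠ j ≤ d, are linearly independent over k as rational functions in the 2d+2 variables a_1,…,a_d, b_1,…,b_d, u, v. -/
import Mathlib


namespace DeopurkarPatel

/-- The field of rational functions over `k` in the `2d + 2` variables
`a 1, …, a d, b 1, …, b d, u, v`: the first summand `Sum.inl (Sum.inl i)` indexes the
variables `a i`, `Sum.inl (Sum.inr i)` indexes the variables `b i`, and `Sum.inr 0`,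
`Sum.inr 1` are `u` and `v`. -/
abbrev RatFnField (k : Type) [Field k] (d : ℕ) : Type :=
  FractionRing (MvPolynomial ((Fin d ⊕ Fin d) ⊕ Fin 2) k)

variable (k : Type) [Field k] (d : ℕ)

/-- the variable `a i` -/
noncomputable def aVar (i : Fin d) : RatFnField k d :=
  algebraMap (MvPolynomial ((Fin d ⊕ Fin d) ⊕ Fin 2) k) _
    (MvPolynomial.X (Sum.inl (Sum.inl i)))

/-- the variable `b i` -/
noncomputable def bVar (i : Fin d) : RatFnField k d :=
  algebraMap (MvPolynomial ((Fin d ⊕ Fin d) ⊕ Fin 2) k) _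
    (MvPolynomial.X (Sum.inl (Sum.inr i)))

/-- the variable `u` -/
noncomputable def uVar : RatFnField k d :=
  algebraMap (MvPolynomial ((Fin d ⊕ Fin d) ⊕ Fin 2) k) _
    (MvPolynomial.X (Sum.inr 0))

/-- the variable `v` -/
noncomputable def vVar : RatFnField k d :=
  algebraMap (MvPolynomial ((Fin d ⊕ Fin d) ⊕ Fin 2) k) _
    (MvPolynomial.X (Sum.inr 1))

/-! ### Auxiliary definitions and lemmas -/

open MvPolynomial Finset

/-- the variable index type -/
abbrev Vars (d : ℕ) : Type := (Fin d ⊕ Fin d) ⊕ Fin 2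

/-- the numerator polynomial `b_{p.1} * (u * a_{p.2} + v)` -/
noncomputable def numP (p : Fin d × Fin d) : MvPolynomial (Vars d) k :=
  X (Sum.inl (Sum.inr p.1)) * (X (Sum.inr 0) * X (Sum.inl (Sum.inl p.2)) + X (Sum.inr 1))

/-- the denominator polynomial `a_{p.2} - a_{p.1}` -/
noncomputable def denP (p : Fin d × Fin d) : MvPolynomial (Vars d) k :=
  X (Sum.inl (Sum.inl p.2)) - X (Sum.inl (Sum.inl p.1))

/-- the set of strictly increasing pairs -/
def sortedPairs (d : ℕ) : Finset (Fin d × Fin d) := univ.filter fun p => p.1 < p.2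

/-- sorting a pair into increasing order -/
def sortp {d : ℕ} (p : Fin d × Fin d) : Fin d × Fin d := if p.1 < p.2 then p else p.swap

/-- the polynomial obtained from the `p`-th rational function by multiplying through
by `∏_{i < j} (a_j - a_i)` -/
noncomputable def MP (p : Fin d × Fin d) : MvPolynomial (Vars d) k :=
  (if p.1 < p.2 then numP k d p else -numP k d p) *
    ∏ p' ∈ (sortedPairs d).erase (sortp p), denP k d p'

lemma MP_def (p : Fin d × Fin d) : MP k d p =
    (if p.1 < p.2 then numP k d p else -numP k d p) *
      ∏ p' ∈ (sortedPairs d).erase (sortp p), denP k d p' := rfl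

lemma X_sub_X_ne_zero {σ : Type} {s t : σ} (h : s ≠ t) :
    (X s - X t : MvPolynomial σ k) ≠ 0 := by
  classical
  intro h0
  have h1 := congrArg (eval (fun x => if x = s then (1 : k) else 0)) h0
  simp [eval_X, h.symm] at h1

lemma sortp_mem {d : ℕ} {p : Fin d × Fin d} (h : p.1 ≠ p.2) : sortp p ∈ sortedPairs d := by
  unfold sortp sortedPairs
  rcases lt_or_gt_of_ne h with h1 | h1
  · simp [h1]
  · simp [not_lt.mpr h1.le, h1]

lemma eq_of_sortp_eq {d : ℕ} {p q : Fin d × Fin d} (h : sortp p = sortp q) :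
    p = q ∨ p = q.swap := by
  unfold sortp at h
  split_ifs at h with h1 h2 h2
  · exact Or.inl h
  · exact Or.inr h
  · exact Or.inr (by rw [← h, Prod.swap_swap])
  · exact Or.inl (Prod.swap_injective h)

lemma exists_inj (hchar : CharZero k ∨ ∃ p : ℕ, p.Prime ∧ CharP k p ∧ d < p) :
    ∃ e : Fin d → k, Function.Injective e := by
  refine ⟨fun m => (m.val : k), fun m m' h => Fin.ext ?_⟩
  rcases hchar with h0 | ⟨p, hp, hP, hdp⟩
  · exact Nat.cast_injective h
  · exact CharP.natCast_injOn_Iio k p (lt_trans m.isLt hdp) (lt_trans m'.isLt hdp) h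

/-- the evaluation point: `a m ↦ e (τ m)` where `τ` sends `i₀` to `j₀` and fixes the rest,
`b m ↦ δ_{m,i₀}`, `u ↦ 0`, `v ↦ 1`. -/
def xpt (e : Fin d → k) (i₀ j₀ : Fin d) : Vars d → k :=
  Sum.elim
    (Sum.elim (fun m => e (if m = i₀ then j₀ else m)) (fun m => if m = i₀ then (1 : k) else 0))
    (fun t => (t.val : k))

lemma eval_denP (e : Fin d → k) (i₀ j₀ : Fin d) (p : Fin d × Fin d) :
    eval (xpt k d e i₀ j₀) (denP k d p)
      = e (if p.2 = i₀ then j₀ else p.2) - e (if p.1 = i₀ then j₀ else p.1) := by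
  simp [denP, xpt]

lemma eval_numP (e : Fin d → k) (i₀ j₀ : Fin d) (p : Fin d × Fin d) :
    eval (xpt k d e i₀ j₀) (numP k d p) = if p.1 = i₀ then 1 else 0 := by
  simp [numP, xpt]

set_option maxHeartbeats 1000000 in
set_option synthInstance.maxHeartbeats 200000 in
/-- the key computation in Lemma 3.6 of Deopurkar–Patel.  Fix
`d ≥ 2` and an algebraically closed field `k` with `char k = 0` or `char k > d`.
The `d(d−1)` rational functions `b i * (u * a j + v) / (a j − a i)`, indexed by
ordered pairs `(i, j)` with `i ≠ j`, are linearly independent over `k` as rational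
functions in the `2d + 2` variables `a 1, …, a d, b 1, …, b d, u, v`. -/
theorem rational_functions_linearly_independent
    [IsAlgClosed k] (hd : 2 ≤ d)
    (hchar : CharZero k ∨ ∃ p : ℕ, p.Prime ∧ CharP k p ∧ d < p) :
    LinearIndependent k
      (fun ij : {p : Fin d × Fin d // p.1 ≠ p.2} =>
        bVar k d ij.1.1 * (uVar k d * aVar k d ij.1.2 + vVar k d) /
          (aVar k d ij.1.2 - aVar k d ij.1.1)) := by
  classical
  obtain ⟨e, he⟩ := exists_inj k d hchar
  rw [Fintype.linearIndependent_iff]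
  intro c hc q
  obtain ⟨⟨i₀, j₀⟩, hij⟩ := q
  have hij' : i₀ ≠ j₀ := hij
  have hinj : Function.Injective
      (algebraMap (MvPolynomial (Vars d) k) (RatFnField k d)) :=
    IsFractionRing.injective _ _
  have hden0 : ∀ p : Fin d × Fin d, p.1 ≠ p.2 →
      algebraMap (MvPolynomial (Vars d) k) (RatFnField k d) (denP k d p) ≠ 0 := by
    intro p hp h0
    exact X_sub_X_ne_zero k
      (show (Sum.inl (Sum.inl p.2) : Vars d) ≠ Sum.inl (Sum.inl p.1) by simp [hp.symm])
      (hinj (h0.trans (map_zero _).symm))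
  -- Step 1: clearing denominators
  have key1 : ∀ p : Fin d × Fin d, p.1 ≠ p.2 →
      bVar k d p.1 * (uVar k d * aVar k d p.2 + vVar k d) /
          (aVar k d p.2 - aVar k d p.1) *
        algebraMap (MvPolynomial (Vars d) k) (RatFnField k d)
          (∏ p' ∈ sortedPairs d, denP k d p')
      = algebraMap (MvPolynomial (Vars d) k) (RatFnField k d) (MP k d p) := by
    intro p hp
    have hnum : bVar k d p.1 * (uVar k d * aVar k d p.2 + vVar k d)
        = algebraMap (MvPolynomial (Vars d) k) (RatFnField k d) (numP k d p) := by
      simp [bVar, uVar, aVar, vVar, numP, map_mul, map_add]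
    have hden : aVar k d p.2 - aVar k d p.1
        = algebraMap (MvPolynomial (Vars d) k) (RatFnField k d) (denP k d p) := by
      simp [aVar, denP, map_sub]
    rw [hnum, hden, ← Finset.mul_prod_erase (sortedPairs d) (denP k d) (sortp_mem hp),
      MP_def]
    by_cases hlt : p.1 < p.2
    · have hs : sortp p = p := if_pos hlt
      rw [if_pos hlt, hs, map_mul, map_mul, div_mul_eq_mul_div, mul_left_comm,
        mul_div_cancel_left₀ _ (hden0 p hp)]
    · have hs : sortp p = p.swap := if_neg hlt
      have hsw : denP k d p.swap = -denP k d p := by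
        simp only [denP, Prod.fst_swap, Prod.snd_swap, neg_sub]
      rw [if_neg hlt, hs, hsw, neg_mul, neg_mul,
        RingHom.map_neg (algebraMap (MvPolynomial (Vars d) k) (RatFnField k d)),
        RingHom.map_neg (algebraMap (MvPolynomial (Vars d) k) (RatFnField k d)),
        map_mul, map_mul, mul_neg, neg_inj, div_mul_eq_mul_div, mul_left_comm,
        mul_div_cancel_left₀ _ (hden0 p hp)]
  -- Step 2: the polynomial identity
  have hc' : ∑ p : {p : Fin d × Fin d // p.1 ≠ p.2}, c p • MP k d p.1 = 0 := by
    apply hinj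
    rw [map_zero, map_sum]
    have step : ∀ p : {p : Fin d × Fin d // p.1 ≠ p.2},
        algebraMap (MvPolynomial (Vars d) k) (RatFnField k d) (c p • MP k d p.1)
        = (c p • (bVar k d p.1.1 * (uVar k d * aVar k d p.1.2 + vVar k d) /
            (aVar k d p.1.2 - aVar k d p.1.1))) *
          algebraMap (MvPolynomial (Vars d) k) (RatFnField k d)
            (∏ p' ∈ sortedPairs d, denP k d p') := by
      intro p
      rw [smul_eq_C_mul, map_mul, ← MvPolynomial.algebraMap_eq,
        ← IsScalarTower.algebraMap_apply, ← Algebra.smul_def, ← key1 p.1 p.2,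
        smul_mul_assoc]
    simp only [step]
    rw [← Finset.sum_mul, hc, zero_mul]
  -- Step 3: evaluate at the point `xpt`
  set x : Vars d → k := xpt k d e i₀ j₀ with hx
  have hc2 := congrArg (eval x) hc'
  rw [map_zero, map_sum] at hc2
  simp only [smul_eval] at hc2
  -- all terms except the `(i₀, j₀)` one vanish
  have hzero : ∀ b : {p : Fin d × Fin d // p.1 ≠ p.2}, b ∈ (univ : Finset _) →
      b ≠ ⟨(i₀, j₀), hij⟩ → c b * eval x (MP k d b.1) = 0 := by
    intro b _ hb
    have hb1 : b.1 = (j₀, i₀) ∨ sortp b.1 ≠ sortp ((i₀, j₀) : Fin d × Fin d) := by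
      by_cases hs : sortp b.1 = sortp ((i₀, j₀) : Fin d × Fin d)
      · rcases eq_of_sortp_eq hs with h | h
        · exact absurd (Subtype.ext h) hb
        · exact Or.inl h
      · exact Or.inr hs
    rcases hb1 with h | h
    · have h0 : eval x (numP k d b.1) = 0 := by
        rw [hx, eval_numP, h, if_neg (Ne.symm hij')]
      have : eval x (MP k d b.1) = 0 := by
        rw [MP_def, map_mul]
        split_ifs <;> simp [h0]
      rw [this, mul_zero]
    · have hmem : sortp ((i₀, j₀) : Fin d × Fin d) ∈ (sortedPairs d).erase (sortp b.1) :=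
        Finset.mem_erase.mpr ⟨Ne.symm h, sortp_mem hij⟩
      have hz : eval x (denP k d (sortp ((i₀, j₀) : Fin d × Fin d))) = 0 := by
        rw [hx]
        unfold sortp
        split_ifs with h1 <;> rw [eval_denP] <;> simp
      have : eval x (MP k d b.1) = 0 := by
        rw [MP_def, map_mul, map_prod, Finset.prod_eq_zero hmem hz, mul_zero]
      rw [this, mul_zero]
  rw [Finset.sum_eq_single (⟨(i₀, j₀), hij⟩ : {p : Fin d × Fin d // p.1 ≠ p.2}) hzero
    (fun h => absurd (mem_univ _) h)] at hc2
  -- the remaining factor is nonzero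
  have hne : eval x (MP k d ((i₀, j₀) : Fin d × Fin d)) ≠ 0 := by
    rw [MP_def, map_mul, map_prod]
    apply mul_ne_zero
    · have h1 : eval x (numP k d ((i₀, j₀) : Fin d × Fin d)) = 1 := by
        rw [hx, eval_numP, if_pos rfl]
      split_ifs <;> simp [h1]
    · rw [Finset.prod_ne_zero_iff]
      intro p' hp'
      obtain ⟨hne', hmem'⟩ := Finset.mem_erase.mp hp'
      have hlt : p'.1 < p'.2 := by simpa [sortedPairs] using hmem'
      rw [hx, eval_denP, sub_ne_zero]
      intro hE
      have hEE := he hE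
      split_ifs at hEE with h1 h2 h2
      · exact hlt.ne (h2.trans h1.symm)
      · apply hne'
        have hp'eq : p' = ((j₀, i₀) : Fin d × Fin d) := Prod.ext hEE.symm h1
        have hji : j₀ < i₀ := by rw [hp'eq] at hlt; exact hlt
        unfold sortp
        rw [if_neg (asymm hji), hp'eq]
        rfl
      · apply hne'
        have hp'eq : p' = ((i₀, j₀) : Fin d × Fin d) := Prod.ext h2 hEE
        have hji : i₀ < j₀ := by rw [hp'eq] at hlt; exact hlt
        unfold sortp
        rw [if_pos hji, hp'eq]
      · exact hlt.ne' hEE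
  exact (mul_eq_zero.mp hc2).resolve_right hne

end DeopurkarPatel
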